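/- arXiv:2512.07189 — 4 statements merged into one kernel-verified Lean document; each statement's English description precedes it below -/
import Mathlib

section
/- The ACA index-assignment map is injective: within a fixed ACA state, two distinct leaf positions (given by distinct pairs of tree position k and Merkle path w within tree k) are assigned distinct integer indexes. -/
/-- The ACA index assigned to a leaf position (k, w). -/
def acaIndex {m : ℕ} (v : Fin m → Bool) (k : Fin m) (w : Fin (k : ℕ) → Bool) : ℕ :=
  1 + (∑ i : Fin m, if k < i ∧ v i then 2 ^ (i : ℕ) else 0)
    + (∑ j : Fin (k : ℕ), if w j then 2 ^ (j : ℕ) else 0)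

lemma sum_bits_lt (n : ℕ) (w : Fin n → Bool) :
    (∑ j : Fin n, if w j then 2 ^ (j : ℕ) else 0) < 2 ^ n := by
  induction n with
  | zero => simp
  | succ n ih =>
    rw [Fin.sum_univ_castSucc]
    simp only [Fin.coe_castSucc]
    have := ih (fun j => w j.castSucc)
    have h2 : (if w (Fin.last n) then 2 ^ ((Fin.last n : Fin (n+1)) : ℕ) else 0) ≤ 2 ^ n := by
      split <;> simp
    calc _ < 2^n + 2^n := by omega
    _ = 2 ^ (n+1) := by ring

lemma sum_bits_inj (n : ℕ) (w₁ w₂ : Fin n → Bool)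
    (h : (∑ j : Fin n, if w₁ j then 2 ^ (j : ℕ) else 0)
       = (∑ j : Fin n, if w₂ j then 2 ^ (j : ℕ) else 0)) : w₁ = w₂ := by
  induction n with
  | zero => funext j; exact absurd j.2 (by omega)
  | succ n ih =>
    rw [Fin.sum_univ_castSucc, Fin.sum_univ_castSucc] at h
    have b1 := sum_bits_lt n (fun j => w₁ j.castSucc)
    have b2 := sum_bits_lt n (fun j => w₂ j.castSucc)
    have hlast : w₁ (Fin.last n) = w₂ (Fin.last n) := by
      rcases hw1 : w₁ (Fin.last n) <;> rcases hw2 : w₂ (Fin.last n) <;>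
        simp [hw1, hw2, Fin.val_last] at h ⊢ <;> omega
    have hrest : (fun j : Fin n => w₁ j.castSucc) = (fun j => w₂ j.castSucc) := by
      apply ih
      rcases hw1 : w₁ (Fin.last n) <;> simp [hw1, hlast ▸ hw1, Fin.val_last] at h <;> omega
    funext j
    induction j using Fin.lastCases with
    | last => exact hlast
    | cast i => exact congrFun hrest i

lemma tree_sum_ge (m : ℕ) (v : Fin m → Bool) (k₁ k₂ : Fin m) (hlt : k₁ < k₂)
    (hk₂ : v k₂ = true) :
    (∑ i : Fin m, if k₂ < i ∧ v i then 2 ^ (i : ℕ) else 0) + 2 ^ (k₂ : ℕ)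
      ≤ ∑ i : Fin m, if k₁ < i ∧ v i then 2 ^ (i : ℕ) else 0 := by
  have key : (∑ i : Fin m, if k₂ < i ∧ v i then 2 ^ (i : ℕ) else 0) + 2 ^ (k₂ : ℕ)
      = ∑ i : Fin m, ((if k₂ < i ∧ v i then 2 ^ (i : ℕ) else 0)
          + (if i = k₂ then 2 ^ (i : ℕ) else 0)) := by
    rw [Finset.sum_add_distrib, Finset.sum_ite_eq' Finset.univ k₂ (fun i => 2 ^ (i : ℕ))]
    simp
  rw [key]
  apply Finset.sum_le_sum
  intro i _
  by_cases hik : i = k₂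
  · subst hik
    simp [lt_irrefl, hlt, hk₂]
  · simp only [if_neg hik, add_zero]
    split
    · rename_i hc
      rw [if_pos ⟨lt_trans hlt hc.1, hc.2⟩]
    · exact Nat.zero_le _

lemma aca_lt (m : ℕ) (v : Fin m → Bool) (k₁ k₂ : Fin m) (hlt : k₁ < k₂)
    (hk₂ : v k₂ = true) (w₁ : Fin (k₁ : ℕ) → Bool) (w₂ : Fin (k₂ : ℕ) → Bool) :
    acaIndex v k₂ w₂ < acaIndex v k₁ w₁ := by
  have h1 := tree_sum_ge m v k₁ k₂ hlt hk₂
  have h2 := sum_bits_lt (k₂ : ℕ) w₂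
  unfold acaIndex
  omega

/-- Injectivity of ACA index assignment: within a fixed state v, distinct valid
leaf positions get distinct indexes. -/
theorem acaIndex_injective (m : ℕ) (v : Fin m → Bool)
    (k₁ k₂ : Fin m) (hk₁ : v k₁ = true) (hk₂ : v k₂ = true)
    (w₁ : Fin (k₁ : ℕ) → Bool) (w₂ : Fin (k₂ : ℕ) → Bool)
    (heq : acaIndex v k₁ w₁ = acaIndex v k₂ w₂) :
    k₁ = k₂ ∧ HEq w₁ w₂ := by
  rcases lt_trichotomy k₁ k₂ with h | h | h
  · exact absurd heq (by have := aca_lt m v k₁ k₂ h hk₂ w₁ w₂; omega)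
  · subst h
    refine ⟨rfl, heq_of_eq ?_⟩
    apply sum_bits_inj
    unfold acaIndex at heq
    omega
  · exact absurd heq (by have := aca_lt m v k₂ k₁ h hk₁ w₂ w₁; omega)
end

section
/- The ACA index-assignment map is surjective onto {1, ..., n} where n = ∑_{i : v_i = true} 2^i: every integer index in this range is achieved by exactly one leaf position. -/
open Finset

/-- A valid leaf position in ACA state v: a present tree k together with
a Merkle path inside it. -/
def LeafPos {m : ℕ} (v : Fin m → Bool) : Type :=
  {p : Σ k : Fin m, (Fin (k : ℕ) → Bool) // v p.1 = true}

private lemma geom2 (k : ℕ) : ∑ i ∈ Finset.range k, 2 ^ i = 2 ^ k - 1 := by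
  induction k with
  | zero => simp
  | succ n ih =>
    rw [Finset.sum_range_succ, ih]
    have : 1 ≤ 2 ^ n := Nat.one_le_two_pow
    have : 2 ^ (n + 1) = 2 * 2 ^ n := by ring
    omega

private lemma bits_lt (k : ℕ) (w : Fin k → Bool) :
    (∑ j : Fin k, if w j then 2 ^ (j : ℕ) else 0) < 2 ^ k := by
  have h1 : (∑ j : Fin k, if w j then 2 ^ (j : ℕ) else 0) ≤ ∑ j : Fin k, 2 ^ (j : ℕ) := by
    apply Finset.sum_le_sum
    intro j _
    split <;> simp
  have h2 : (∑ j : Fin k, 2 ^ (j : ℕ)) = 2 ^ k - 1 := by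
    rw [Fin.sum_univ_eq_sum_range, geom2]
  have : 1 ≤ 2 ^ k := Nat.one_le_two_pow
  omega

private lemma bits_inj : ∀ (k : ℕ) (w w' : Fin k → Bool),
    (∑ j : Fin k, if w j then 2 ^ (j : ℕ) else 0)
      = (∑ j : Fin k, if w' j then 2 ^ (j : ℕ) else 0) → w = w' := by
  intro k
  induction k with
  | zero => intro w w' _; funext j; exact absurd j.2 (by omega)
  | succ n ih =>
    intro w w' h
    rw [Fin.sum_univ_succ, Fin.sum_univ_succ] at h
    have e : ∀ (u : Fin (n+1) → Bool),
        (∑ j : Fin n, if u j.succ then 2 ^ ((j.succ : Fin (n+1)) : ℕ) else 0)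
          = 2 * ∑ j : Fin n, if u j.succ then 2 ^ (j : ℕ) else 0 := by
      intro u
      rw [Finset.mul_sum]
      apply Finset.sum_congr rfl
      intro j _
      split <;> simp [pow_succ]; ring
    rw [e w, e w'] at h
    simp only [Fin.val_zero, pow_zero] at h
    have h0 : w 0 = w' 0 := by
      rcases Bool.eq_false_or_eq_true (w 0) with h1 | h1 <;>
        rcases Bool.eq_false_or_eq_true (w' 0) with h2 | h2 <;>
          simp [h1, h2] at h ⊢ <;> omega
    have hrest : (∑ j : Fin n, if w j.succ then 2 ^ (j : ℕ) else 0)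
        = ∑ j : Fin n, if w' j.succ then 2 ^ (j : ℕ) else 0 := by
      rcases Bool.eq_false_or_eq_true (w 0) with h1 | h1 <;>
        simp [h1, h0 ▸ h1] at h <;> omega
    have := ih (fun j => w j.succ) (fun j => w' j.succ) hrest
    funext j
    refine Fin.cases h0 (fun i => ?_) j
    exact congrFun this i

/-- For present trees k < k', the "suffix" sum at k dominates that at k' plus 2^k'. -/
private lemma suffix_ge {m : ℕ} (v : Fin m → Bool) (k k' : Fin m)
    (hlt : (k : ℕ) < (k' : ℕ)) (hv' : v k' = true) :
    (∑ i : Fin m, if k' < i ∧ v i then 2 ^ (i : ℕ) else 0) + 2 ^ (k' : ℕ)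
      ≤ ∑ i : Fin m, if k < i ∧ v i then 2 ^ (i : ℕ) else 0 := by
  have h2 : (2 : ℕ) ^ (k' : ℕ) = ∑ i : Fin m, if i = k' then 2 ^ (i : ℕ) else 0 := by
    rw [Finset.sum_ite_eq' Finset.univ k' (fun i => 2 ^ (i : ℕ))]; simp
  rw [h2, ← Finset.sum_add_distrib]
  apply Finset.sum_le_sum
  intro i _
  by_cases hik : i = k'
  · subst hik
    simp [Fin.lt_def, hlt, hv', lt_irrefl]
  · split
    · rename_i hc
      have : k < i := lt_trans (by exact Fin.lt_def.mpr hlt) hc.1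
      simp [this, hc.2, hik]
    · simp [hik]

/-- Range bound: the suffix sum at a present k plus 2^k is at most n. -/
private lemma suffix_add_le {m : ℕ} (v : Fin m → Bool) (k : Fin m) (hv : v k = true) :
    (∑ i : Fin m, if k < i ∧ v i then 2 ^ (i : ℕ) else 0) + 2 ^ (k : ℕ)
      ≤ ∑ i : Fin m, if v i then 2 ^ (i : ℕ) else 0 := by
  have h2 : (2 : ℕ) ^ (k : ℕ) = ∑ i : Fin m, if i = k then 2 ^ (i : ℕ) else 0 := by
    rw [Finset.sum_ite_eq' Finset.univ k (fun i => 2 ^ (i : ℕ))]; simp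
  rw [h2, ← Finset.sum_add_distrib]
  apply Finset.sum_le_sum
  intro i _
  by_cases hik : i = k
  · subst hik; simp [hv, lt_irrefl]
  · split
    · rename_i hc; simp [hc.2, hik]
    · simp [hik]

private lemma acaIndex_strict {m : ℕ} (v : Fin m → Bool) (k k' : Fin m)
    (hv' : v k' = true) (hlt : (k : ℕ) < (k' : ℕ))
    (w : Fin (k : ℕ) → Bool) (w' : Fin (k' : ℕ) → Bool) :
    acaIndex v k' w' < acaIndex v k w := by
  unfold acaIndex
  have h1 := bits_lt (k' : ℕ) w'
  have h2 := suffix_ge v k k' hlt hv'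
  omega

private lemma acaIndex_injOn {m : ℕ} (v : Fin m → Bool) :
    Function.Injective (fun p : LeafPos v => acaIndex v p.1.1 p.1.2) := by
  rintro ⟨⟨k, w⟩, hk⟩ ⟨⟨k', w'⟩, hk'⟩ h
  simp only at h
  rcases lt_trichotomy (k : ℕ) (k' : ℕ) with hlt | heq | hgt
  · exact absurd h (Nat.ne_of_gt (acaIndex_strict v k k' hk' hlt w w'))
  · have hkk : k = k' := Fin.ext heq
    subst hkk
    have hw : w = w' := by
      apply bits_inj
      unfold acaIndex at h
      omega
    subst hw
    rfl
  · exact absurd h.symm (Nat.ne_of_gt (acaIndex_strict v k' k hk hgt w' w))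

instance leafPosFintype {m : ℕ} (v : Fin m → Bool) : Fintype (LeafPos v) := by
  unfold LeafPos; infer_instance

private lemma card_leafPos {m : ℕ} (v : Fin m → Bool) :
    Fintype.card (LeafPos v) = ∑ i : Fin m, if v i then 2 ^ (i : ℕ) else 0 := by
  classical
  have e : LeafPos v ≃ Σ k : {k : Fin m // v k = true}, (Fin ((k : Fin m) : ℕ) → Bool) :=
    Equiv.subtypeSigmaEquiv (fun k : Fin m => Fin (k : ℕ) → Bool) (fun k => v k = true)
  rw [Fintype.card_congr e, Fintype.card_sigma]
  have h1 : ∀ k : {k : Fin m // v k = true},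
      Fintype.card (Fin ((k : Fin m) : ℕ) → Bool) = 2 ^ ((k : Fin m) : ℕ) := by
    intro k; rw [Fintype.card_fun]; simp
  rw [Finset.sum_congr rfl (fun k _ => h1 k)]
  rw [← Finset.sum_subtype (Finset.filter (fun i => v i = true) Finset.univ)
      (by intro x; simp) (fun i : Fin m => 2 ^ (i : ℕ))]
  rw [Finset.sum_filter]

/-- Surjectivity: every index t ∈ [1, n], with n = ∑_{i : v i} 2^i, is achieved
by exactly one leaf position. -/
theorem acaIndex_surjective (m : ℕ) (v : Fin m → Bool) (t : ℕ) (ht1 : 1 ≤ t)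
    (ht2 : t ≤ ∑ i : Fin m, if v i then 2 ^ (i : ℕ) else 0) :
    ∃! p : LeafPos v, acaIndex v p.1.1 p.1.2 = t := by
  classical
  set n := ∑ i : Fin m, if v i then 2 ^ (i : ℕ) else 0 with hn
  have hmem : ∀ p : LeafPos v, acaIndex v p.1.1 p.1.2 ∈ Finset.Icc 1 n := by
    rintro ⟨⟨k, w⟩, hk⟩
    simp only [Finset.mem_Icc]
    constructor
    · unfold acaIndex; omega
    · have h1 := bits_lt (k : ℕ) w
      have h2 := suffix_add_le v k hk
      unfold acaIndex
      omega
  set f : LeafPos v → ↥(Finset.Icc 1 n) := fun p => ⟨acaIndex v p.1.1 p.1.2, hmem p⟩ with hf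
  have hinj : Function.Injective f := by
    intro a b h
    exact acaIndex_injOn v (congrArg Subtype.val h)
  have hcard : Fintype.card (LeafPos v) = Fintype.card ↥(Finset.Icc 1 n) := by
    rw [card_leafPos, Fintype.card_coe, Nat.card_Icc]
    omega
  have hbij : Function.Bijective f := (Fintype.bijective_iff_injective_and_card f).2 ⟨hinj, hcard⟩
  obtain ⟨p, hp⟩ := hbij.2 ⟨t, Finset.mem_Icc.mpr ⟨ht1, ht2⟩⟩
  refine ⟨p, congrArg Subtype.val hp, fun q hq => ?_⟩
  exact acaIndex_injOn v (hq.trans (congrArg Subtype.val hp).symm)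
end

section
/- Inserting an element into a canonical ACA holding n elements produces the canonical ACA state for n + 1: the new present-tree set corresponds to the binary representation of n+1, and the carry chain (merging trees of heights 0, 1, ..., j into one tree of height j+1) occurs exactly when bits 0 through j of n are all 1. -/
/-- ACA insertion is binary increment: if bits 0..j-1 of n are all 1 and bit j
is 0 (the maximal carry chain), then the new state (bits of n+1) has bits
0..j-1 cleared, bit j set, and all higher bits unchanged. -/
theorem aca_insert_is_increment (n j : ℕ)
    (hlow : ∀ i < j, Nat.testBit n i = true) (hj : Nat.testBit n j = false) :
    ∀ i, Nat.testBit (n + 1) i =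
      (if i < j then false else if i = j then true else Nat.testBit n i) := by
  have hmod : n % 2 ^ (j + 1) = 2 ^ j - 1 := by
    apply Nat.eq_of_testBit_eq
    intro i
    simp only [Nat.testBit_mod_two_pow, Nat.testBit_two_pow_sub_one]
    rcases lt_trichotomy i j with h | h | h
    · simp [h, Nat.lt_succ_of_lt h, hlow i h]
    · subst h; simp [hj]
    · simp [Nat.not_lt.2 h, Nat.not_lt.2 (le_of_lt (Nat.succ_le_of_lt h)), show ¬ i < j + 1 by omega]
  have hpow : (0:ℕ) < 2 ^ j := Nat.pow_pos (by norm_num)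
  have h2 : 2 ^ j < 2 ^ (j + 1) := Nat.pow_lt_pow_right (by norm_num) (by omega)
  have hmod' : (n + 1) % 2 ^ (j + 1) = 2 ^ j := by
    rw [Nat.add_mod, hmod, Nat.mod_eq_of_lt (show 1 < 2 ^ (j+1) by omega),
        Nat.sub_add_cancel hpow, Nat.mod_eq_of_lt h2]
  have hdiv : (n + 1) / 2 ^ (j + 1) = n / 2 ^ (j + 1) := by
    have e1 := Nat.div_add_mod (n + 1) (2 ^ (j + 1))
    have e2 := Nat.div_add_mod n (2 ^ (j + 1))
    rw [hmod'] at e1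
    rw [hmod] at e2
    have : 2 ^ (j + 1) * ((n + 1) / 2 ^ (j + 1)) = 2 ^ (j + 1) * (n / 2 ^ (j + 1)) := by omega
    exact Nat.eq_of_mul_eq_mul_left (by positivity) this
  intro i
  rcases le_or_gt i j with h | h
  · have hi : i < j + 1 := by omega
    have := Nat.testBit_mod_two_pow (n + 1) (j + 1) i
    rw [hmod', Nat.testBit_two_pow] at this
    simp only [hi, decide_true, Bool.true_and] at this
    rw [← this]
    rcases lt_or_eq_of_le h with h' | h'
    · simp [h', Nat.ne_of_gt h']
    · simp [h']
  · -- i > j: bits unchanged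
    have hni : ¬ i < j := by omega
    have hne : i ≠ j := by omega
    simp only [hni, if_false, hne, if_false]
    have key : ∀ m : ℕ, Nat.testBit m i = Nat.testBit (m / 2 ^ (j + 1)) (i - (j + 1)) := by
      intro m
      rw [Nat.testBit_eq_decide_div_mod_eq, Nat.testBit_eq_decide_div_mod_eq, Nat.div_div_eq_div_mul, ← pow_add,
        show j + 1 + (i - (j + 1)) = i from by omega]
    rw [key, key n, hdiv]
end

section
/- State-transition uniqueness for ACA deletion verification: given the previous ACA vector v^{(t-1)} and current vector v^{(t)} of equal length, if all components except the k-th coincide, and the witness w recomputes both the k-th root of v^{(t-1)} (with the FID at the leaf) and the k-th root of v^{(t)} (with ⊥ at the leaf), then in a collision-resistant hash model the only leaf whose content changed is the one addressed by w. -/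
/-- Root of a complete Merkle tree of height k over leaf hashes
`L 0, …, L (2^k - 1)`. -/
def merkleRoot {α : Type*} (H : α → α → α) : ℕ → (ℕ → α) → α
  | 0, L => L 0
  | k + 1, L => H (merkleRoot H k L) (merkleRoot H k fun i => L (2 ^ k + i))

/-- Recompute a root from a leaf value along a path. `w` lists, from the leaf
upward, whether the current node is a left child; `s` are the sibling hashes. -/
def recomputeRoot {α : Type*} (H : α → α → α) : List Bool → List α → α → α
  | [], _, a => a
  | _ :: _, [], a => a
  | b :: w, x :: s, a => recomputeRoot H w s (if b then H a x else H x a)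

/-- Zero-based leaf position addressed by a path (`true` = left child,
level 0 first). -/
def pathPos : List Bool → ℕ
  | [] => 0
  | b :: w => (if b then 0 else 1) + 2 * pathPos w


lemma pathPos_concat : ∀ (w : List Bool) (b : Bool),
    pathPos (w ++ [b]) = pathPos w + (if b then 0 else 1) * 2 ^ w.length
  | [], b => by cases b <;> simp [pathPos]
  | c :: w, b => by
      simp only [List.cons_append, pathPos, List.length_cons, List.append_eq]
      rw [pathPos_concat w b]
      cases b <;> cases c <;> simp [pow_succ] <;> ring

lemma recompute_concat {α : Type*} (H : α → α → α) :
    ∀ (w : List Bool) (s : List α), w.length = s.length → ∀ (b : Bool) (x a : α),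
      recomputeRoot H (w ++ [b]) (s ++ [x]) a =
        if b then H (recomputeRoot H w s a) x else H x (recomputeRoot H w s a) := by
  intro w
  induction w with
  | nil =>
      intro s hs b x a
      obtain rfl : s = [] := List.length_eq_zero_iff.mp hs.symm
      simp [recomputeRoot]
  | cons c w ih =>
      intro s hs b x a
      cases s with
      | nil => simp at hs
      | cons y s' =>
          simp only [List.cons_append, recomputeRoot]
          exact ih s' (by simpa using hs) b x _

lemma merkleRoot_inj {α : Type*} (H : α → α → α)
    (hH : Function.Injective fun p : α × α => H p.1 p.2) :
    ∀ (k : ℕ) (f g : ℕ → α), merkleRoot H k f = merkleRoot H k g →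
      ∀ q < 2 ^ k, f q = g q := by
  intro k
  induction k with
  | zero => intro f g h q hq; interval_cases q; exact h
  | succ k ih =>
      intro f g h q hq
      simp only [merkleRoot] at h
      obtain ⟨hl, hr⟩ := Prod.mk.inj (hH (a₁ := (_, _)) (a₂ := (_, _)) h)
      rw [pow_succ] at hq
      by_cases hc : q < 2 ^ k
      · exact ih f g hl q hc
      · have hlt : q - 2 ^ k < 2 ^ k := by omega
        have := ih _ _ hr (q - 2 ^ k) hlt
        simpa [Nat.add_sub_cancel' (not_lt.mp hc)] using this

lemma merkle_aux {α : Type*} (H : α → α → α)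
    (hH : Function.Injective fun p : α × α => H p.1 p.2) :
    ∀ (k : ℕ) (w : List Bool) (s : List α), w.length = k → s.length = k →
      ∀ (f g : ℕ → α) (a a' : α),
      recomputeRoot H w s a = merkleRoot H k f →
      recomputeRoot H w s a' = merkleRoot H k g →
      ∀ q < 2 ^ k, q ≠ pathPos w → f q = g q := by
  intro k
  induction k with
  | zero =>
      intro w s hw hs f g a a' h1 h2 q hq hne
      obtain rfl : w = [] := List.length_eq_zero_iff.mp hw
      simp [pathPos] at hne
      omega
  | succ k ih =>
      intro w s hw hs f g a a' h1 h2 q hq hne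
      obtain ⟨w', b, rfl⟩ : ∃ w' b, w = w' ++ [b] := by
        rcases List.eq_nil_or_concat w with h | ⟨w', b, h⟩
        · simp [h] at hw
        · exact ⟨w', b, by simpa [List.concat_eq_append] using h⟩
      obtain ⟨s', x, rfl⟩ : ∃ s' x, s = s' ++ [x] := by
        rcases List.eq_nil_or_concat s with h | ⟨s', x, h⟩
        · simp [h] at hs
        · exact ⟨s', x, by simpa [List.concat_eq_append] using h⟩
      have hw' : w'.length = k := by simpa using hw
      have hs' : s'.length = k := by simpa using hs
      rw [recompute_concat H w' s' (by rw [hw', hs']) b x a] at h1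
      rw [recompute_concat H w' s' (by rw [hw', hs']) b x a'] at h2
      simp only [merkleRoot] at h1 h2
      have hq' : q < 2 ^ k + 2 ^ k := by rw [pow_succ] at hq; omega
      cases b with
      | true =>
          simp only [if_true] at h1 h2
          obtain ⟨hl1, hr1⟩ := Prod.mk.inj (hH (a₁ := (_, _)) (a₂ := (_, _)) h1)
          obtain ⟨hl2, hr2⟩ := Prod.mk.inj (hH (a₁ := (_, _)) (a₂ := (_, _)) h2)
          have hr : merkleRoot H k (fun i => f (2 ^ k + i)) =
              merkleRoot H k (fun i => g (2 ^ k + i)) := by rw [← hr1, ← hr2]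
          have hpp : pathPos (w' ++ [true]) = pathPos w' := by
            simp [pathPos_concat]
          by_cases hc : q < 2 ^ k
          · exact ih w' s' hw' hs' f g a a' hl1 hl2 q hc (by omega)
          · have hlt : q - 2 ^ k < 2 ^ k := by omega
            have := merkleRoot_inj H hH k _ _ hr (q - 2 ^ k) hlt
            simpa [Nat.add_sub_cancel' (not_lt.mp hc)] using this
      | false =>
          simp only [Bool.false_eq_true, if_false] at h1 h2
          obtain ⟨hl1, hr1⟩ := Prod.mk.inj (hH (a₁ := (_, _)) (a₂ := (_, _)) h1)
          obtain ⟨hl2, hr2⟩ := Prod.mk.inj (hH (a₁ := (_, _)) (a₂ := (_, _)) h2)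
          have hl : merkleRoot H k f = merkleRoot H k g := by rw [← hl1, ← hl2]
          have hpp : pathPos (w' ++ [false]) = pathPos w' + 2 ^ k := by
            simp [pathPos_concat, hw']
          by_cases hc : q < 2 ^ k
          · exact merkleRoot_inj H hH k f g hl q hc
          · have hlt : q - 2 ^ k < 2 ^ k := by omega
            have hne' : q - 2 ^ k ≠ pathPos w' := by omega
            have := ih w' s' hw' hs' _ _ a a' hr1 hr2 (q - 2 ^ k) hlt hne'
            simpa [Nat.add_sub_cancel' (not_lt.mp hc)] using this

/-- Deletion-verification uniqueness: over an injective (collision-free)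
two-ary hash `H` and injective leaf encoding `enc`, if the same path `w` with
the same sibling hashes `s` certifies leaf value `some fid` for the tree of
leaves `L` and leaf value `none` for the tree of leaves `L'`, then `L` and
`L'` agree at every leaf position other than the one addressed by `w`. -/
theorem merkle_single_leaf_change {α FID : Type*} (H : α → α → α)
    (hH : Function.Injective fun p : α × α => H p.1 p.2)
    (enc : Option FID → α) (henc : Function.Injective enc)
    (k : ℕ) (L L' : ℕ → Option FID) (fid : FID)
    (w : List Bool) (s : List α) (hw : w.length = k) (hs : s.length = k)
    (hcert : recomputeRoot H w s (enc (some fid)) = merkleRoot H k (fun i => enc (L i)))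
    (hcert' : recomputeRoot H w s (enc none) = merkleRoot H k (fun i => enc (L' i))) :
    ∀ q < 2 ^ k, q ≠ pathPos w → L q = L' q := by
  intro q hq hne
  exact henc (merkle_aux H hH k w s hw hs _ _ _ _ hcert hcert' q hq hne)
end
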